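/- For the map f : ℝ³ → ℝ⁴ as above, J̃(f_x) = f_x at every point, and J̃(2x² f_x + f_y + 2x f_z) = -(2x² f_x + f_y + 2x f_z) at every point (x,y,z) ∈ ℝ³. -/
import Mathlib


/-- The example hypersurface, curried. -/
noncomputable def exf13 (x y z : ℝ) : Fin 4 → ℝ :=
  Real.cosh z • (![x * y + 1, x + y / 2, x * y, x - y / 2])
    - Real.sinh z • (![x * y, x - y / 2, x * y + 1, x + y / 2])

/-- The canonical para-complex structure on `ℝ⁴`: `J̃(a,b,c,d) = (c,d,a,b)`. -/
noncomputable def Jt4' (v : Fin 4 → ℝ) : Fin 4 → ℝ := ![v 2, v 3, v 0, v 1]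

lemma hdx (x y z : ℝ) : HasDerivAt (fun t => exf13 t y z)
    (![Real.cosh z * y - Real.sinh z * y, Real.cosh z - Real.sinh z,
       Real.cosh z * y - Real.sinh z * y, Real.cosh z - Real.sinh z]) x := by
  rw [hasDerivAt_pi]
  intro i
  fin_cases i
  · show HasDerivAt (fun t => Real.cosh z * (t * y + 1) - Real.sinh z * (t * y))
      (Real.cosh z * y - Real.sinh z * y) x
    exact (((((hasDerivAt_id x).mul_const y).add_const 1).const_mul _).sub
      (((hasDerivAt_id x).mul_const y).const_mul _)).congr_deriv (by ring)
  · show HasDerivAt (fun t => Real.cosh z * (t + y / 2) - Real.sinh z * (t - y / 2))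
      (Real.cosh z - Real.sinh z) x
    exact ((((hasDerivAt_id x).add_const (y / 2)).const_mul _).sub
      (((hasDerivAt_id x).sub_const (y / 2)).const_mul _)).congr_deriv (by ring)
  · show HasDerivAt (fun t => Real.cosh z * (t * y) - Real.sinh z * (t * y + 1))
      (Real.cosh z * y - Real.sinh z * y) x
    exact ((((hasDerivAt_id x).mul_const y).const_mul _).sub
      ((((hasDerivAt_id x).mul_const y).add_const 1).const_mul _)).congr_deriv (by ring)
  · show HasDerivAt (fun t => Real.cosh z * (t - y / 2) - Real.sinh z * (t + y / 2))
      (Real.cosh z - Real.sinh z) x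
    exact ((((hasDerivAt_id x).sub_const (y / 2)).const_mul _).sub
      (((hasDerivAt_id x).add_const (y / 2)).const_mul _)).congr_deriv (by ring)

lemma hdy (x y z : ℝ) : HasDerivAt (fun t => exf13 x t z)
    (![Real.cosh z * x - Real.sinh z * x, Real.cosh z / 2 + Real.sinh z / 2,
       Real.cosh z * x - Real.sinh z * x,
       -(Real.cosh z / 2) - Real.sinh z / 2]) y := by
  rw [hasDerivAt_pi]
  intro i
  fin_cases i
  · show HasDerivAt (fun t => Real.cosh z * (x * t + 1) - Real.sinh z * (x * t))
      (Real.cosh z * x - Real.sinh z * x) y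
    exact (((((hasDerivAt_id y).const_mul x).add_const 1).const_mul _).sub
      (((hasDerivAt_id y).const_mul x).const_mul _)).congr_deriv (by ring)
  · show HasDerivAt (fun t => Real.cosh z * (x + t / 2) - Real.sinh z * (x - t / 2))
      (Real.cosh z / 2 + Real.sinh z / 2) y
    exact ((((hasDerivAt_id y).div_const 2).const_add x).const_mul _).sub
      ((((hasDerivAt_id y).div_const 2).const_sub x).const_mul _) |>.congr_deriv (by ring)
  · show HasDerivAt (fun t => Real.cosh z * (x * t) - Real.sinh z * (x * t + 1))
      (Real.cosh z * x - Real.sinh z * x) y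
    exact ((((hasDerivAt_id y).const_mul x).const_mul _).sub
      ((((hasDerivAt_id y).const_mul x).add_const 1).const_mul _)).congr_deriv (by ring)
  · show HasDerivAt (fun t => Real.cosh z * (x - t / 2) - Real.sinh z * (x + t / 2))
      (-(Real.cosh z / 2) - Real.sinh z / 2) y
    exact ((((hasDerivAt_id y).div_const 2).const_sub x).const_mul _).sub
      ((((hasDerivAt_id y).div_const 2).const_add x).const_mul _) |>.congr_deriv (by ring)

lemma hdz (x y z : ℝ) : HasDerivAt (fun t => exf13 x y t)
    (![Real.sinh z * (x * y + 1) - Real.cosh z * (x * y),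
       Real.sinh z * (x + y / 2) - Real.cosh z * (x - y / 2),
       Real.sinh z * (x * y) - Real.cosh z * (x * y + 1),
       Real.sinh z * (x - y / 2) - Real.cosh z * (x + y / 2)]) z := by
  rw [hasDerivAt_pi]
  intro i
  fin_cases i
  · show HasDerivAt (fun t => Real.cosh t * (x * y + 1) - Real.sinh t * (x * y))
      (Real.sinh z * (x * y + 1) - Real.cosh z * (x * y)) z
    exact ((Real.hasDerivAt_cosh z).mul_const _).sub ((Real.hasDerivAt_sinh z).mul_const _)
  · show HasDerivAt (fun t => Real.cosh t * (x + y / 2) - Real.sinh t * (x - y / 2))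
      (Real.sinh z * (x + y / 2) - Real.cosh z * (x - y / 2)) z
    exact ((Real.hasDerivAt_cosh z).mul_const _).sub ((Real.hasDerivAt_sinh z).mul_const _)
  · show HasDerivAt (fun t => Real.cosh t * (x * y) - Real.sinh t * (x * y + 1))
      (Real.sinh z * (x * y) - Real.cosh z * (x * y + 1)) z
    exact ((Real.hasDerivAt_cosh z).mul_const _).sub ((Real.hasDerivAt_sinh z).mul_const _)
  · show HasDerivAt (fun t => Real.cosh t * (x - y / 2) - Real.sinh t * (x + y / 2))
      (Real.sinh z * (x - y / 2) - Real.cosh z * (x + y / 2)) z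
    exact ((Real.hasDerivAt_cosh z).mul_const _).sub ((Real.hasDerivAt_sinh z).mul_const _)

/-- `J̃ f_x = f_x` and `J̃(2x² f_x + f_y + 2x f_z) = -(2x² f_x + f_y + 2x f_z)`
at every point `(x,y,z) ∈ ℝ³`. -/
theorem stmt13 (x y z : ℝ) :
    Jt4' (deriv (fun t => exf13 t y z) x) = deriv (fun t => exf13 t y z) x ∧
    Jt4' ((2 * x ^ 2) • deriv (fun t => exf13 t y z) x + deriv (fun t => exf13 x t z) y
        + (2 * x) • deriv (fun t => exf13 x y t) z)
      = -((2 * x ^ 2) • deriv (fun t => exf13 t y z) x + deriv (fun t => exf13 x t z) y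
        + (2 * x) • deriv (fun t => exf13 x y t) z) := by
  rw [(hdx x y z).deriv, (hdy x y z).deriv, (hdz x y z).deriv]
  constructor <;> funext i <;> fin_cases i <;>
    simp [Jt4', Real.cosh_eq, Real.sinh_eq] <;> ring
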